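/- arXiv:1901.02991 — 3 statements merged into one kernel-verified Lean document; each statement's English description precedes it below -/
import Mathlib

section
/- Under assumptions (A1)–(A4), (A6) and (R), suppose P(S=0, D=1) > 0, P(S=1, T=1, C=1) > 0 and P(S=1, T=0, C=1) > 0, and suppose the law of W under P(·|{S=0, D=1}) is absolutely continuous with respect to its law under P(·|{S=1, T=1, C=1}) and with respect to its law under P(·|{S=1, T=0, C=1}). Let g₁ : 𝒲 → ℝ be a version of E[Y₍11₎ | {S=1, D=1}, W] and g₀ : 𝒲 → ℝ a version of E[Y₍10₎ | {S=1, T=0, C=1}, W]. Then E[Y₍01₎ − Y₍00₎ | S=0, D=1] = E[g₁(W) − g₀(W) | S=0, D=1]. (This identifies the population average treatment effect on treated compliers, PATT-C, from RCT data.) -/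
open MeasureTheory ProbabilityTheory

/-!
Let `ν` be the law among treated compliers `{T = 1, C = 1}` and `r_d(w) = E_ν[Y₁d | W = w]`.
By (A3)/(A4), conditioning `ν` further on `S` does not change the conditional law of `Y₁d`
given `W`, so `r_d ∘ W` is a version of `E[Y₁d | W]` both in the RCT stratum `S = 1` and in the
target stratum `S = 0` (which, by (A6), is the conditioning event `{S = 0, D = 1}`).
A version computed on the RCT agrees with `r_d` almost everywhere for the RCT covariate law,
hence, by absolute continuity, for the target covariate law. For `g₁` this applies directly.
For `g₀`, randomization (R) makes the joint law of `(W, Y₁₀)` among compliers the same in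
both arms, so `g₀`, computed on the controls, is again a version under the treated compliers.
Integrating over the target stratum and using consistency (A1) gives the identity.
-/

section CondProbability

variable {Ω E : Type*} {mΩ : MeasurableSpace Ω} {μ : Measure Ω} {s t : Set Ω}
  [NormedAddCommGroup E]

lemma cond_congr_ae (h : s =ᵐ[μ] t) : μ[|s] = μ[|t] := by
  rw [ProbabilityTheory.cond, ProbabilityTheory.cond, measure_congr h,
    Measure.restrict_congr_set h]

lemma MeasureTheory.Integrable.cond {f : Ω → E} (hf : Integrable f μ) (s : Set Ω) :
    Integrable f μ[|s] := by
  by_cases hs : μ s = 0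
  · rw [cond_eq_zero_of_meas_eq_zero hs]
    exact integrable_zero_measure
  · exact hf.restrict.smul_measure (ENNReal.inv_ne_top.mpr hs)

lemma setIntegral_cond [NormedSpace ℝ E] (f : Ω → E) (ht : MeasurableSet t) :
    ∫ x in t, f x ∂μ[|s] = (μ s)⁻¹.toReal • ∫ x in t ∩ s, f x ∂μ := by
  rw [ProbabilityTheory.cond, Measure.restrict_smul, integral_smul_measure,
    Measure.restrict_restrict ht]

end CondProbability

lemma Set.indicator_eq_indicator_one_mul {ι M₀ : Type*} [MulZeroOneClass M₀] (s : Set ι)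
    (f : ι → M₀) : s.indicator f = s.indicator 1 * f := by
  funext i
  simpa using Set.indicator_mul_left s 1 f (i := i)

lemma setIntegral_inter_eq_setIntegral_condExp_indicator {Ω : Type*}
    {m mΩ : MeasurableSpace Ω} {μ : Measure Ω} (hm : m ≤ mΩ) [SigmaFinite (μ.trim hm)]
    {f : Ω → ℝ} (hf : Integrable f μ) {A B : Set Ω} (hA : MeasurableSet A)
    (hB : MeasurableSet[m] B) :
    ∫ x in B ∩ A, f x ∂μ = ∫ x in B, μ[A.indicator f | m] x ∂μ := by
  rw [setIntegral_condExp hm (hf.indicator hA) hB, setIntegral_indicator hA]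

section CondIndep

variable {Ω β : Type*} {m mΩ : MeasurableSpace Ω} [StandardBorelSpace Ω] {hm : m ≤ mΩ}
  {μ : Measure Ω} [IsFiniteMeasure μ] {mβ : MeasurableSpace β}

lemma ProbabilityTheory.CondIndepFun.ae_indepFun_condExpKernel {β' : Type*}
    {mβ' : MeasurableSpace β'} [MeasurableSpace.CountableOrCountablyGenerated Ω (β × β')]
    {f : Ω → β} {g : Ω → β'} (h : CondIndepFun m hm f g μ) (hf : Measurable f)
    (hg : Measurable g) :
    ∀ᵐ ω ∂μ, IndepFun f g (condExpKernel μ m ω) := by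
  filter_upwards [ae_of_ae_trim hm ((condIndepFun_iff_map_prod_eq_prod_map_map hf hg).mp h)]
    with ω hω
  rw [indepFun_iff_map_prod_eq_prod_map_map hf.aemeasurable hg.aemeasurable]
  simpa only [Kernel.map_apply _ (hf.prodMk hg), Kernel.prod_apply, Kernel.map_apply _ hf,
    Kernel.map_apply _ hg] using hω

variable [MeasurableSpace.CountableOrCountablyGenerated Ω (ℝ × β)] {Y : Ω → ℝ} {S : Ω → β}
  {t : Set β}

lemma ProbabilityTheory.CondIndepFun.condExp_indicator_ae_eq_mul
    (h : CondIndepFun m hm Y S μ) (hY : Measurable Y) (hS : Measurable S)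
    (hYi : Integrable Y μ) (ht : MeasurableSet t) :
    μ[(S ⁻¹' t).indicator Y | m] =ᵐ[μ] μ[(S ⁻¹' t).indicator 1 | m] * μ[Y | m] := by
  have hA : MeasurableSet (S ⁻¹' t) := hS ht
  filter_upwards [condExp_ae_eq_integral_condExpKernel hm (hYi.indicator hA),
    condExp_ae_eq_integral_condExpKernel hm
      (f := (S ⁻¹' t).indicator 1) ((integrable_const (1 : ℝ)).indicator hA),
    condExp_ae_eq_integral_condExpKernel hm hYi, h.ae_indepFun_condExpKernel hY hS]
    with ω hYA hA1 hY1 hind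
  have hind' : IndepFun (t.indicator (1 : β → ℝ) ∘ S) Y (condExpKernel μ m ω) :=
    hind.symm.comp (measurable_one.indicator ht) measurable_id
  rw [Pi.mul_apply, hYA, hA1, hY1, Set.indicator_eq_indicator_one_mul]
  exact hind'.integral_mul_eq_mul_integral
    ((measurable_one.indicator ht).comp hS).aestronglyMeasurable hY.aestronglyMeasurable

lemma ProbabilityTheory.CondIndepFun.condExp_cond_ae_eq (h : CondIndepFun m hm Y S μ)
    (hY : Measurable Y) (hS : Measurable S) (hYi : Integrable Y μ) (ht : MeasurableSet t) :
    (μ[|S ⁻¹' t])[Y | m] =ᵐ[μ[|S ⁻¹' t]] μ[Y | m] := by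
  have hA : MeasurableSet (S ⁻¹' t) := hS ht
  -- With `A = S ⁻¹' t` and `B ∈ m`, both `∫_{B ∩ A} Y` and `∫_{B ∩ A} μ[Y|m]` equal
  -- `∫_B μ[1_A|m] * μ[Y|m]`: by conditional independence, resp. by pulling out `μ[Y|m]`.
  have hpull : μ[(S ⁻¹' t).indicator (μ[Y | m]) | m] =ᵐ[μ]
      μ[(S ⁻¹' t).indicator 1 | m] * μ[Y | m] := by
    rw [Set.indicator_eq_indicator_one_mul]
    exact condExp_mul_of_stronglyMeasurable_right stronglyMeasurable_condExp
      (Set.indicator_eq_indicator_one_mul (S ⁻¹' t) (μ[Y | m]) ▸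
        integrable_condExp.indicator hA)
      ((integrable_const 1).indicator hA)
  refine (ae_eq_condExp_of_forall_setIntegral_eq hm (hYi.cond _)
    (fun _ _ _ ↦ integrable_condExp.cond _ |>.integrableOn) (fun B hB _ ↦ ?_)
    stronglyMeasurable_condExp.aestronglyMeasurable).symm
  rw [setIntegral_cond _ (hm B hB), setIntegral_cond _ (hm B hB),
    setIntegral_inter_eq_setIntegral_condExp_indicator hm integrable_condExp hA hB,
    setIntegral_inter_eq_setIntegral_condExp_indicator hm hYi hA hB,
    setIntegral_congr_ae (hm B hB) (hpull.mono fun _ hx _ ↦ hx),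
    setIntegral_congr_ae (hm B hB)
      ((h.condExp_indicator_ae_eq_mul hY hS hYi ht).mono fun _ hx _ ↦ hx)]

end CondIndep

section Covariates

variable {Ω 𝒲 : Type*} {mΩ : MeasurableSpace Ω} {m𝒲 : MeasurableSpace 𝒲} {μ μ' : Measure Ω}
  {W : Ω → 𝒲}

lemma measurable_integral_condDistrib_id [IsFiniteMeasure μ] {Y : Ω → ℝ} :
    Measurable fun w ↦ ∫ y, y ∂condDistrib Y W μ w :=
  (measurable_snd.stronglyMeasurable.integral_condDistrib (f := fun p : 𝒲 × ℝ ↦ p.2)).measurable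

lemma ae_eq_comp_of_map_absolutelyContinuous (hW : Measurable W) (hac : μ.map W ≪ μ'.map W)
    {g h : 𝒲 → ℝ} (hg : Measurable g) (hh : Measurable h)
    (hgh : (fun ω ↦ g (W ω)) =ᵐ[μ'] fun ω ↦ h (W ω)) :
    (fun ω ↦ g (W ω)) =ᵐ[μ] fun ω ↦ h (W ω) := by
  have hp : MeasurableSet {w | g w = h w} := measurableSet_eq_fun hg hh
  exact (ae_map_iff hW.aemeasurable hp).mp
    (hac.ae_le ((ae_map_iff hW.aemeasurable hp).mpr hgh))

lemma condExp_ae_eq_comp_of_map_prod_eq [IsFiniteMeasure μ] [IsFiniteMeasure μ'] {Y : Ω → ℝ}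
    (hW : Measurable W) (hmap : μ.map (fun ω ↦ (W ω, Y ω)) = μ'.map (fun ω ↦ (W ω, Y ω)))
    (hYμ : Integrable Y μ) (hYμ' : Integrable Y μ') {h : 𝒲 → ℝ} (hh : Measurable h)
    (h' : μ'[Y | m𝒲.comap W] =ᵐ[μ'] fun ω ↦ h (W ω)) :
    μ[Y | m𝒲.comap W] =ᵐ[μ] fun ω ↦ h (W ω) := by
  have hkernel : condDistrib Y W μ = condDistrib Y W μ' := by
    simp only [condDistrib_def, hmap]
  have hlaw : μ.map W = μ'.map W := by
    rw [← Measure.fst_map_prodMk₀ hYμ.aemeasurable, hmap,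
      Measure.fst_map_prodMk₀ hYμ'.aemeasurable]
  refine (condExp_ae_eq_integral_condDistrib' hW hYμ).trans
    (ae_eq_comp_of_map_absolutelyContinuous hW hlaw.absolutelyContinuous
      measurable_integral_condDistrib_id hh ?_)
  rw [hkernel]
  exact (condExp_ae_eq_integral_condDistrib' hW hYμ').symm.trans h'

end Covariates

section Randomization

variable {Ω α β γ : Type*} {mΩ : MeasurableSpace Ω} {mα : MeasurableSpace α}
  {mβ : MeasurableSpace β} {mγ : MeasurableSpace γ} {ρ : Measure Ω} [IsFiniteMeasure ρ]
  {T : Ω → α} {V : Ω → β} {C : Ω → γ}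

lemma ProbabilityTheory.IndepFun.map_cond_inter_eq_map_cond
    (h : IndepFun T (fun ω ↦ (V ω, C ω)) ρ) (hT : Measurable T) (hV : Measurable V)
    (hC : Measurable C) {s : Set α} {u : Set γ}
    (hs : MeasurableSet s) (hu : MeasurableSet u) (hρ : ρ (T ⁻¹' s ∩ C ⁻¹' u) ≠ 0) :
    (ρ[|T ⁻¹' s ∩ C ⁻¹' u]).map V = (ρ[|C ⁻¹' u]).map V := by
  have hρs : ρ (T ⁻¹' s) ≠ 0 := fun h0 ↦ hρ (measure_mono_null Set.inter_subset_left h0)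
  have hpre (F : Set β) : C ⁻¹' u ∩ V ⁻¹' F = (fun ω ↦ (V ω, C ω)) ⁻¹' (F ×ˢ u) := by
    rw [Set.mk_preimage_prod, Set.inter_comm]
  have hpre_univ : C ⁻¹' u = (fun ω ↦ (V ω, C ω)) ⁻¹' (Set.univ ×ˢ u) := by
    rw [Set.mk_preimage_prod, Set.preimage_univ, Set.univ_inter]
  ext F hF
  rw [Measure.map_apply hV hF, Measure.map_apply hV hF, cond_apply ((hT hs).inter (hC hu)),
    cond_apply (hC hu), Set.inter_assoc, hpre, hpre_univ,
    h.measure_inter_preimage_eq_mul _ _ hs (MeasurableSet.univ.prod hu),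
    h.measure_inter_preimage_eq_mul _ _ hs (hF.prod hu),
    ENNReal.mul_inv (.inl hρs) (.inl (measure_ne_top _ _)), mul_mul_mul_comm,
    ENNReal.inv_mul_cancel hρs (measure_ne_top _ _), one_mul]

lemma ProbabilityTheory.IndepFun.map_cond_inter_eq_map_cond_inter {μ : Measure Ω}
    [IsFiniteMeasure μ] {A : Set Ω} (hA : MeasurableSet A)
    (h : IndepFun T (fun ω ↦ (V ω, C ω)) μ[|A]) (hT : Measurable T) (hV : Measurable V)
    (hC : Measurable C) {s s' : Set α} {u : Set γ} (hs : MeasurableSet s)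
    (hs' : MeasurableSet s') (hu : MeasurableSet u) (hμs : μ (A ∩ (T ⁻¹' s ∩ C ⁻¹' u)) ≠ 0)
    (hμs' : μ (A ∩ (T ⁻¹' s' ∩ C ⁻¹' u)) ≠ 0) :
    (μ[|A ∩ (T ⁻¹' s ∩ C ⁻¹' u)]).map V = (μ[|A ∩ (T ⁻¹' s' ∩ C ⁻¹' u)]).map V := by
  rw [← cond_cond_eq_cond_inter hA ((hT hs).inter (hC hu)),
    ← cond_cond_eq_cond_inter hA ((hT hs').inter (hC hu)),
    h.map_cond_inter_eq_map_cond hT hV hC hs hu (cond_pos_of_inter_ne_zero hA hμs).ne',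
    h.map_cond_inter_eq_map_cond hT hV hC hs' hu (cond_pos_of_inter_ne_zero hA hμs').ne']

end Randomization

section Transport

variable {Ω β 𝒲 : Type*} {mΩ : MeasurableSpace Ω} [StandardBorelSpace Ω]
  {mβ : MeasurableSpace β} {m𝒲 : MeasurableSpace 𝒲}
  [MeasurableSpace.CountableOrCountablyGenerated Ω (ℝ × β)] {ν μ : Measure Ω}
  [IsFiniteMeasure ν] [IsFiniteMeasure μ] {W : Ω → 𝒲} {Y : Ω → ℝ} {S : Ω → β} {t₀ t₁ : Set β}

lemma ProbabilityTheory.CondIndepFun.condExp_cond_ae_eq_comp_of_map_eq (hW : Measurable W)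
    (h : CondIndepFun (m𝒲.comap W) hW.comap_le Y S ν) (hY : Measurable Y) (hS : Measurable S)
    (hYi : Integrable Y ν) (ht₀ : MeasurableSet t₀) (ht₁ : MeasurableSet t₁)
    (hmap : μ.map (fun ω ↦ (W ω, Y ω)) = (ν[|S ⁻¹' t₁]).map (fun ω ↦ (W ω, Y ω)))
    (hYμ : Integrable Y μ) (hac : (ν[|S ⁻¹' t₀]).map W ≪ μ.map W) {g : 𝒲 → ℝ}
    (hg : Measurable g) (hgμ : (fun ω ↦ g (W ω)) =ᵐ[μ] μ[Y | m𝒲.comap W]) :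
    (ν[|S ⁻¹' t₀])[Y | m𝒲.comap W] =ᵐ[ν[|S ⁻¹' t₀]] fun ω ↦ g (W ω) := by
  set reg : 𝒲 → ℝ := fun w ↦ ∫ y, y ∂condDistrib Y W ν w
  have hreg_meas : Measurable reg := measurable_integral_condDistrib_id
  have hreg {t : Set β} (ht : MeasurableSet t) :
      (ν[|S ⁻¹' t])[Y | m𝒲.comap W] =ᵐ[ν[|S ⁻¹' t]] fun ω ↦ reg (W ω) :=
    (h.condExp_cond_ae_eq hY hS hYi ht).trans
      (cond_absolutelyContinuous.ae_le (condExp_ae_eq_integral_condDistrib' hW hYi))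
  have hμ : μ[Y | m𝒲.comap W] =ᵐ[μ] fun ω ↦ reg (W ω) :=
    condExp_ae_eq_comp_of_map_prod_eq hW hmap hYμ (hYi.cond _) hreg_meas (hreg ht₁)
  exact (hreg ht₀).trans
    (ae_eq_comp_of_map_absolutelyContinuous hW hac hg hreg_meas (hgμ.trans hμ)).symm

end Transport

lemma integral_eq_integral_of_condExp_ae_eq {Ω : Type*} {m mΩ : MeasurableSpace Ω}
    {μ : Measure Ω} (hm : m ≤ mΩ) [SigmaFinite (μ.trim hm)] {f g : Ω → ℝ}
    (h : μ[f | m] =ᵐ[μ] g) : ∫ x, f x ∂μ = ∫ x, g x ∂μ :=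
  (integral_condExp hm).symm.trans (integral_congr_ae h)

theorem pattc_identification_general
    {Ω 𝒲 : Type*} [MeasurableSpace Ω] [StandardBorelSpace Ω]
    [MeasurableSpace 𝒲]
    (P : Measure Ω) [IsProbabilityMeasure P]
    (S T C D : Ω → Bool) (hS : Measurable S) (hT : Measurable T)
    (hC : Measurable C)
    (W : Ω → 𝒲) (hW : Measurable W)
    (Y : Bool → Bool → Ω → ℝ)
    (hYmeas : ∀ s d, Measurable (Y s d)) (hYint : ∀ s d, Integrable (Y s d) P)
    -- (A1) consistency under parallel studies
    (hA1 : ∀ d, Y false d =ᵐ[P] Y true d)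
    -- (A3) strong ignorability of sample assignment for treated
    (hA3 : CondIndepFun (MeasurableSpace.comap W inferInstance) hW.comap_le (Y true true) S
      (P[|{ω | T ω = true ∧ C ω = true}]))
    -- (A4) strong ignorability of sample assignment for controls
    (hA4 : CondIndepFun (MeasurableSpace.comap W inferInstance) hW.comap_le (Y true false) S
      (P[|{ω | T ω = true ∧ C ω = true}]))
    -- (A6) one-sided noncompliance: {D=1} = {T=1} ∩ {C=1} up to null sets
    (hA6 : ({ω | D ω = true} : Set Ω) =ᵐ[P] ({ω | T ω = true} ∩ {ω | C ω = true} : Set Ω))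
    -- (R) randomization in the RCT
    (hR : IndepFun T (fun ω => (W ω, C ω, (Y true false ω, Y true true ω)))
      (P[|{ω | S ω = true}]))
    -- positivity of the conditioning events
    (hpos1 : 0 < P {ω | S ω = true ∧ T ω = true ∧ C ω = true})
    (hpos2 : 0 < P {ω | S ω = true ∧ T ω = false ∧ C ω = true})
    -- absolute continuity of the covariate laws
    (hac1 : (P[|{ω | S ω = false ∧ D ω = true}]).map W ≪
      (P[|{ω | S ω = true ∧ T ω = true ∧ C ω = true}]).map W)
    (hac0 : (P[|{ω | S ω = false ∧ D ω = true}]).map W ≪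
      (P[|{ω | S ω = true ∧ T ω = false ∧ C ω = true}]).map W)
    -- g₁ : version of E[Y₁₁ | S=1, D=1, W] ; g₀ : version of E[Y₁₀ | S=1, T=0, C=1, W]
    (g₁ g₀ : 𝒲 → ℝ) (hg₁m : Measurable g₁) (hg₀m : Measurable g₀)
    (hg₁ : (fun ω => g₁ (W ω)) =ᵐ[P[|{ω | S ω = true ∧ D ω = true}]]
      (P[|{ω | S ω = true ∧ D ω = true}])[Y true true | MeasurableSpace.comap W inferInstance])
    (hg₀ : (fun ω => g₀ (W ω)) =ᵐ[P[|{ω | S ω = true ∧ T ω = false ∧ C ω = true}]]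
      (P[|{ω | S ω = true ∧ T ω = false ∧ C ω = true}])[Y true false | MeasurableSpace.comap W inferInstance]) :
    ∫ ω, (Y false true ω - Y false false ω) ∂(P[|{ω | S ω = false ∧ D ω = true}]) =
      ∫ ω, (g₁ (W ω) - g₀ (W ω)) ∂(P[|{ω | S ω = false ∧ D ω = true}]) := by
  have hS₁ (b : Bool) : MeasurableSet (S ⁻¹' {b}) := hS (measurableSet_singleton b)
  have hTC : MeasurableSet {ω | T ω = true ∧ C ω = true} :=
    (hT (measurableSet_singleton true)).inter (hC (measurableSet_singleton true))
  set ν := P[|{ω | T ω = true ∧ C ω = true}]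
  have hSD (b : Bool) : P[|{ω | S ω = b ∧ D ω = true}] = ν[|S ⁻¹' {b}] := by
    rw [cond_cond_eq_cond_inter hTC (hS₁ b), Set.inter_comm]
    exact cond_congr_ae ((Filter.EventuallyEq.refl _ _).inter hA6)
  have hν₁ : P[|{ω | S ω = true ∧ T ω = true ∧ C ω = true}] = ν[|S ⁻¹' {true}] := by
    rw [cond_cond_eq_cond_inter hTC (hS₁ true), Set.inter_comm]
    rfl
  have hlaw : (P[|{ω | S ω = true ∧ T ω = false ∧ C ω = true}]).map
      (fun ω ↦ (W ω, Y true false ω)) =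
        (ν[|S ⁻¹' {true}]).map (fun ω ↦ (W ω, Y true false ω)) := by
    have hR' : IndepFun T (fun ω ↦ ((W ω, Y true false ω), C ω)) (P[|S ⁻¹' {true}]) :=
      hR.comp measurable_id
        (by fun_prop : Measurable fun p : 𝒲 × Bool × ℝ × ℝ ↦ ((p.1, p.2.2.1), p.2.1))
    rw [← hν₁]
    show (P[|S ⁻¹' {true} ∩ (T ⁻¹' {false} ∩ C ⁻¹' {true})]).map _ =
      (P[|S ⁻¹' {true} ∩ (T ⁻¹' {true} ∩ C ⁻¹' {true})]).map _
    exact hR'.map_cond_inter_eq_map_cond_inter (hS₁ true) hT (hW.prodMk (hYmeas _ _)) hC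
      (measurableSet_singleton false) (measurableSet_singleton true)
      (measurableSet_singleton true) hpos2.ne' hpos1.ne'
  rw [hSD false] at hac0 hac1 ⊢
  rw [hν₁] at hac1
  rw [hSD true] at hg₁
  have key₁ := hA3.condExp_cond_ae_eq_comp_of_map_eq hW (hYmeas _ _) hS ((hYint _ _).cond _)
    (measurableSet_singleton false) (measurableSet_singleton true) rfl
    (((hYint _ _).cond _).cond _) hac1 hg₁m hg₁
  have key₀ := hA4.condExp_cond_ae_eq_comp_of_map_eq hW (hYmeas _ _) hS ((hYint _ _).cond _)
    (measurableSet_singleton false) (measurableSet_singleton true) hlaw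
    ((hYint _ _).cond _) hac0 hg₀m hg₀
  have hconsistency : (fun ω ↦ Y false true ω - Y false false ω) =ᵐ[ν[|S ⁻¹' {false}]]
      Y true true - Y true false :=
    (cond_absolutelyContinuous.trans cond_absolutelyContinuous).ae_le
      ((hA1 true).sub (hA1 false))
  rw [integral_congr_ae hconsistency]
  exact integral_eq_integral_of_condExp_ae_eq hW.comap_le
    ((condExp_sub (((hYint _ _).cond _).cond _) (((hYint _ _).cond _).cond _) _).trans
      (key₁.sub key₀))

/-- **PATT-C identification (Theorem 1).** Under consistency (A1), conditional independence of
compliance and sample/treatment assignment (A2), strong ignorability of sample assignment for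
treated (A3) and controls (A4), one-sided noncompliance (A6) and RCT randomization (R), the
population average treatment effect on treated compliers is identified from the RCT data:
`E[Y₀₁ − Y₀₀ | S=0, D=1] = E[g₁(W) − g₀(W) | S=0, D=1]`, where `g₁` is a version of
`E[Y₁₁ | S=1, D=1, W]` and `g₀` a version of `E[Y₁₀ | S=1, T=0, C=1, W]`. -/
theorem pattc_identification
    {Ω 𝒲 : Type*} [MeasurableSpace Ω] [StandardBorelSpace Ω]
    [MeasurableSpace 𝒲] [StandardBorelSpace 𝒲]
    (P : Measure Ω) [IsProbabilityMeasure P]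
    (S T C D : Ω → Bool) (hS : Measurable S) (hT : Measurable T)
    (hC : Measurable C) (hD : Measurable D)
    (W : Ω → 𝒲) (hW : Measurable W)
    (Y : Bool → Bool → Ω → ℝ)
    (hYmeas : ∀ s d, Measurable (Y s d)) (hYint : ∀ s d, Integrable (Y s d) P)
    -- (A1) consistency under parallel studies
    (hA1 : ∀ d, Y false d =ᵐ[P] Y true d)
    -- (A2) conditional independence of compliance and sample/treatment assignment given W
    (hA2 : CondIndepFun (MeasurableSpace.comap W inferInstance) hW.comap_le C (fun ω => (S ω, T ω)) P)
    -- (A3) strong ignorability of sample assignment for treated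
    (hA3 : CondIndepFun (MeasurableSpace.comap W inferInstance) hW.comap_le (Y true true) S
      (P[|{ω | T ω = true ∧ C ω = true}]))
    (hA3pos : ∀ᵐ ω ∂(P[|{ω | T ω = true ∧ C ω = true}]),
      0 < ((P[|{ω | T ω = true ∧ C ω = true}])[({ω | S ω = true}).indicator
            (fun _ => (1 : ℝ)) | MeasurableSpace.comap W inferInstance]) ω ∧
      ((P[|{ω | T ω = true ∧ C ω = true}])[({ω | S ω = true}).indicator
            (fun _ => (1 : ℝ)) | MeasurableSpace.comap W inferInstance]) ω < 1)
    -- (A4) strong ignorability of sample assignment for controls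
    (hA4 : CondIndepFun (MeasurableSpace.comap W inferInstance) hW.comap_le (Y true false) S
      (P[|{ω | T ω = true ∧ C ω = true}]))
    -- (A6) one-sided noncompliance: {D=1} = {T=1} ∩ {C=1} up to null sets
    (hA6 : ({ω | D ω = true} : Set Ω) =ᵐ[P] ({ω | T ω = true} ∩ {ω | C ω = true} : Set Ω))
    -- (R) randomization in the RCT
    (hR : IndepFun T (fun ω => (W ω, C ω, (Y true false ω, Y true true ω)))
      (P[|{ω | S ω = true}]))
    -- positivity of the conditioning events
    (hpos0 : 0 < P {ω | S ω = false ∧ D ω = true})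
    (hpos1 : 0 < P {ω | S ω = true ∧ T ω = true ∧ C ω = true})
    (hpos2 : 0 < P {ω | S ω = true ∧ T ω = false ∧ C ω = true})
    -- absolute continuity of the covariate laws
    (hac1 : (P[|{ω | S ω = false ∧ D ω = true}]).map W ≪
      (P[|{ω | S ω = true ∧ T ω = true ∧ C ω = true}]).map W)
    (hac0 : (P[|{ω | S ω = false ∧ D ω = true}]).map W ≪
      (P[|{ω | S ω = true ∧ T ω = false ∧ C ω = true}]).map W)
    -- g₁ : version of E[Y₁₁ | S=1, D=1, W] ; g₀ : version of E[Y₁₀ | S=1, T=0, C=1, W]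
    (g₁ g₀ : 𝒲 → ℝ) (hg₁m : Measurable g₁) (hg₀m : Measurable g₀)
    (hg₁ : (fun ω => g₁ (W ω)) =ᵐ[P[|{ω | S ω = true ∧ D ω = true}]]
      (P[|{ω | S ω = true ∧ D ω = true}])[Y true true | MeasurableSpace.comap W inferInstance])
    (hg₀ : (fun ω => g₀ (W ω)) =ᵐ[P[|{ω | S ω = true ∧ T ω = false ∧ C ω = true}]]
      (P[|{ω | S ω = true ∧ T ω = false ∧ C ω = true}])[Y true false | MeasurableSpace.comap W inferInstance]) :
    ∫ ω, (Y false true ω - Y false false ω) ∂(P[|{ω | S ω = false ∧ D ω = true}]) =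
      ∫ ω, (g₁ (W ω) - g₀ (W ω)) ∂(P[|{ω | S ω = false ∧ D ω = true}]) :=
  pattc_identification_general P S T C D hS hT hC W hW Y hYmeas hYint hA1 hA3 hA4 hA6 hR hpos1 hpos2
    hac1 hac0 g₁ g₀ hg₁m hg₀m hg₁ hg₀
end

section
/- Under assumptions (A1), (A3) and (A6), suppose P(S=0, D=1) > 0 and P(S=1, T=1, C=1) > 0, and suppose the law of W under P(·|{S=0, D=1}) is absolutely continuous with respect to its law under P(·|{S=1, T=1, C=1}). Let g₁ : 𝒲 → ℝ be a version of E[Y₍11₎ | {S=1, D=1}, W]. Then E[Y₍01₎ | S=0, D=1] = E[g₁(W) | S=0, D=1]. -/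
/-!
Condition everything on the treated compliers `A = {T = 1, C = 1}`; by (A6) the events
`{S = s, D = 1}` are `A ∩ {S = s}` up to null sets. Under `P[|A]`, conditional independence of
`Y₁₁` and `S` given `W` means that `P[|A][Y₁₁ | W]` is also a version of `E[Y₁₁ | W]` under each
further conditioning on `{S = s}`. Hence `g₁(W) = P[|A][Y₁₁ | W]` almost surely on the RCT
sample, and, both sides being functions of `W`, absolute continuity of the covariate laws carries
this equality over to the target population, where the tower property and (A1) conclude.
-/

open MeasureTheory ProbabilityTheory Set

namespace MeasureTheory.Measure.AbsolutelyContinuous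

variable {Ω 𝒲 : Type*} {mΩ : MeasurableSpace Ω} [MeasurableSpace 𝒲] {W : Ω → 𝒲}
  {μ ν : Measure Ω}

theorem trim_comap (hW : Measurable W) (hac : μ.map W ≪ ν.map W) :
    μ.trim hW.comap_le ≪ ν.trim hW.comap_le := by
  refine @Measure.AbsolutelyContinuous.mk _ (MeasurableSpace.comap W inferInstance) _ _
    fun s hs hνs => ?_
  obtain ⟨N, hN, rfl⟩ := hs
  rw [trim_measurableSet_eq hW.comap_le ⟨N, hN, rfl⟩, ← Measure.map_apply hW hN] at hνs ⊢
  exact hac hνs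

theorem ae_eq_of_stronglyMeasurable_comap {E : Type*} [TopologicalSpace E]
    [TopologicalSpace.MetrizableSpace E] (hW : Measurable W) (hac : μ.map W ≪ ν.map W) {φ ψ : Ω → E}
    (hφ : StronglyMeasurable[MeasurableSpace.comap W inferInstance] φ)
    (hψ : StronglyMeasurable[MeasurableSpace.comap W inferInstance] ψ) (h : φ =ᵐ[ν] ψ) :
    φ =ᵐ[μ] ψ :=
  ae_eq_of_ae_eq_trim <| (hac.trim_comap hW).ae_eq <|
    StronglyMeasurable.ae_eq_trim_of_stronglyMeasurable hW.comap_le hφ hψ h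

end MeasureTheory.Measure.AbsolutelyContinuous

namespace ProbabilityTheory

variable {Ω : Type*} {m mΩ : MeasurableSpace Ω} {μ : Measure Ω}

theorem cond_congr_set {s t : Set Ω} (h : s =ᵐ[μ] t) : μ[|s] = μ[|t] := by
  rw [cond, cond, measure_congr h, Measure.restrict_congr_set h]

theorem setIntegral_cond {s u : Set Ω} (hu : MeasurableSet u) (φ : Ω → ℝ) :
    ∫ ω in u, φ ω ∂μ[|s] = (μ s).toReal⁻¹ * ∫ ω in u ∩ s, φ ω ∂μ := by
  rw [cond, Measure.restrict_smul, integral_smul_measure, Measure.restrict_restrict hu,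
    ENNReal.toReal_inv, smul_eq_mul]

theorem _root_.MeasureTheory.Integrable.cond_s1 {f : Ω → ℝ} (hf : Integrable f μ) {s : Set Ω}
    (hs : μ s ≠ 0) : Integrable f μ[|s] :=
  hf.restrict.smul_measure (ENNReal.inv_ne_top.mpr hs)

section CondIndepFun

variable [StandardBorelSpace Ω] [IsFiniteMeasure μ] {hm : m ≤ mΩ}

/-- Conditionally on `m`, the regular conditional distribution makes `f` and `g` independent for
almost every `ω`, so the integral of `f * g` against it factorises. -/
theorem CondIndepFun.condExp_mul_ae_eq {f g : Ω → ℝ} (hfg : CondIndepFun m hm f g μ)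
    (hf : Measurable f) (hg : Measurable g) (hf_int : Integrable f μ) (hg_int : Integrable g μ)
    (hfg_int : Integrable (f * g) μ) :
    μ[f * g | m] =ᵐ[μ] μ[f | m] * μ[g | m] := by
  have h_indep : ∀ᵐ ω ∂μ, f ⟂ᵢ[condExpKernel μ m ω] g := by
    filter_upwards [ae_of_ae_trim hm ((condIndepFun_iff_map_prod_eq_prod_map_map hf hg).1 hfg)]
      with ω hω
    rw [indepFun_iff_map_prod_eq_prod_map_map hf.aemeasurable hg.aemeasurable]
    simpa [Kernel.map_apply _ hf, Kernel.map_apply _ hg, Kernel.map_apply _ (hf.prodMk hg),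
      Kernel.prod_apply] using hω
  filter_upwards [condExp_ae_eq_integral_condExpKernel hm hfg_int,
    condExp_ae_eq_integral_condExpKernel hm hf_int, condExp_ae_eq_integral_condExpKernel hm hg_int,
    h_indep] with ω hfg_eq hf_eq hg_eq hω
  rw [Pi.mul_apply, hfg_eq, hf_eq, hg_eq]
  exact hω.integral_mul_eq_mul_integral hf.aestronglyMeasurable hg.aestronglyMeasurable

theorem CondIndepFun.setIntegral_inter_preimage_condExp {β : Type*} [MeasurableSpace β]
    {f : Ω → ℝ} {g : Ω → β} (hfg : CondIndepFun m hm f g μ) (hf : Measurable f)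
    (hg : Measurable g) (hf_int : Integrable f μ) {t : Set β} (ht : MeasurableSet t)
    {u : Set Ω} (hu : MeasurableSet[m] u) :
    ∫ ω in u ∩ g ⁻¹' t, (μ[f | m]) ω ∂μ = ∫ ω in u ∩ g ⁻¹' t, f ω ∂μ := by
  set χ : Ω → ℝ := (g ⁻¹' t).indicator 1
  have hB : MeasurableSet (g ⁻¹' t) := hg ht
  have hχ : Measurable χ := measurable_const.indicator hB
  have hχ_int : Integrable χ μ := (integrable_const 1).indicator hB
  have h_mul (h : Ω → ℝ) : h * χ = (g ⁻¹' t).indicator h := by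
    ext ω; by_cases hω : ω ∈ g ⁻¹' t <;> simp [χ, hω]
  have h_int {h : Ω → ℝ} (hh : Integrable h μ) : Integrable (h * χ) μ := by
    rw [h_mul]; exact hh.indicator hB
  have hfχ : CondIndepFun m hm f χ μ := hfg.comp measurable_id (measurable_const.indicator ht)
  calc ∫ ω in u ∩ g ⁻¹' t, (μ[f | m]) ω ∂μ
      = ∫ ω in u, (μ[f | m] * χ) ω ∂μ := by rw [h_mul, setIntegral_indicator hB]
    _ = ∫ ω in u, (μ[μ[f | m] * χ | m]) ω ∂μ :=
        (setIntegral_condExp hm (h_int integrable_condExp) hu).symm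
    _ = ∫ ω in u, (μ[f | m] * μ[χ | m]) ω ∂μ := integral_congr_ae (ae_restrict_of_ae
        (condExp_mul_of_stronglyMeasurable_left stronglyMeasurable_condExp
          (h_int integrable_condExp) hχ_int))
    _ = ∫ ω in u, (μ[f * χ | m]) ω ∂μ := integral_congr_ae (ae_restrict_of_ae
        (hfχ.condExp_mul_ae_eq hf hχ hf_int hχ_int (h_int hf_int)).symm)
    _ = ∫ ω in u, (f * χ) ω ∂μ := setIntegral_condExp hm (h_int hf_int) hu
    _ = ∫ ω in u ∩ g ⁻¹' t, f ω ∂μ := by rw [h_mul, setIntegral_indicator hB]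

theorem CondIndepFun.condExp_ae_eq_condExp_cond {β : Type*} [MeasurableSpace β]
    {f : Ω → ℝ} {g : Ω → β} (hfg : CondIndepFun m hm f g μ) (hf : Measurable f)
    (hg : Measurable g) (hf_int : Integrable f μ) {t : Set β} (ht : MeasurableSet t)
    (hμt : μ (g ⁻¹' t) ≠ 0) :
    μ[f | m] =ᵐ[μ[|g ⁻¹' t]] (μ[|g ⁻¹' t])[f | m] := by
  refine ae_eq_condExp_of_forall_setIntegral_eq hm (hf_int.cond_s1 hμt)
    (fun u _ _ => (integrable_condExp.cond_s1 hμt).integrableOn) (fun u hu _ => ?_)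
    stronglyMeasurable_condExp.aestronglyMeasurable
  rw [setIntegral_cond (hm u hu), setIntegral_cond (hm u hu),
    hfg.setIntegral_inter_preimage_condExp hf hg hf_int ht hu]

theorem CondIndepFun.integral_cond_eq_integral_comp {𝒲 β : Type*} [MeasurableSpace 𝒲]
    [MeasurableSpace β] {W : Ω → 𝒲} (hW : Measurable W) {f : Ω → ℝ} {g : Ω → β}
    (hfg : CondIndepFun (MeasurableSpace.comap W inferInstance) hW.comap_le f g μ)
    (hf : Measurable f) (hg : Measurable g) (hf_int : Integrable f μ) {t t' : Set β}
    (ht : MeasurableSet t) (ht' : MeasurableSet t') (hμt : μ (g ⁻¹' t) ≠ 0)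
    (hμt' : μ (g ⁻¹' t') ≠ 0) (hac : (μ[|g ⁻¹' t']).map W ≪ (μ[|g ⁻¹' t]).map W)
    {φ : 𝒲 → ℝ} (hφ : Measurable φ) (hφ_version : (fun ω => φ (W ω)) =ᵐ[μ[|g ⁻¹' t]]
      (μ[|g ⁻¹' t])[f | MeasurableSpace.comap W inferInstance]) :
    ∫ ω, f ω ∂μ[|g ⁻¹' t'] = ∫ ω, φ (W ω) ∂μ[|g ⁻¹' t'] := by
  have hφ_t : (fun ω => φ (W ω)) =ᵐ[μ[|g ⁻¹' t]] μ[f | MeasurableSpace.comap W inferInstance] :=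
    hφ_version.trans (hfg.condExp_ae_eq_condExp_cond hf hg hf_int ht hμt).symm
  have hφ_t' : (fun ω => φ (W ω)) =ᵐ[μ[|g ⁻¹' t']]
      μ[f | MeasurableSpace.comap W inferInstance] :=
    hac.ae_eq_of_stronglyMeasurable_comap hW (hφ.comp (comap_measurable W)).stronglyMeasurable
      stronglyMeasurable_condExp hφ_t
  calc ∫ ω, f ω ∂μ[|g ⁻¹' t']
      = ∫ ω, ((μ[|g ⁻¹' t'])[f | MeasurableSpace.comap W inferInstance]) ω ∂μ[|g ⁻¹' t'] :=
        (integral_condExp hW.comap_le).symm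
    _ = ∫ ω, (μ[f | MeasurableSpace.comap W inferInstance]) ω ∂μ[|g ⁻¹' t'] :=
        integral_congr_ae (hfg.condExp_ae_eq_condExp_cond hf hg hf_int ht' hμt').symm
    _ = ∫ ω, φ (W ω) ∂μ[|g ⁻¹' t'] := integral_congr_ae hφ_t'.symm

end CondIndepFun

end ProbabilityTheory

theorem pattc_first_term_identification_general
    {Ω 𝒲 : Type*} [MeasurableSpace Ω] [StandardBorelSpace Ω]
    [MeasurableSpace 𝒲]
    (P : Measure Ω) [IsProbabilityMeasure P]
    (S T C D : Ω → Bool) (hS : Measurable S) (hT : Measurable T)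
    (hC : Measurable C)
    (W : Ω → 𝒲) (hW : Measurable W)
    (Y : Bool → Bool → Ω → ℝ)
    (hYmeas : ∀ s d, Measurable (Y s d)) (hYint : ∀ s d, Integrable (Y s d) P)
    -- (A1) consistency under parallel studies
    (hA1 : ∀ d, Y false d =ᵐ[P] Y true d)
    -- (A3) strong ignorability of sample assignment for treated
    (hA3 : CondIndepFun (MeasurableSpace.comap W inferInstance) hW.comap_le (Y true true) S
      (P[|{ω | T ω = true ∧ C ω = true}]))
    -- (A6) one-sided noncompliance: {D=1} = {T=1} ∩ {C=1} up to null sets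
    (hA6 : ({ω | D ω = true} : Set Ω) =ᵐ[P] ({ω | T ω = true} ∩ {ω | C ω = true} : Set Ω))
    -- positivity of the conditioning events
    (hpos0 : 0 < P {ω | S ω = false ∧ D ω = true})
    (hpos1 : 0 < P {ω | S ω = true ∧ T ω = true ∧ C ω = true})
    -- absolute continuity of the covariate laws
    (hac1 : (P[|{ω | S ω = false ∧ D ω = true}]).map W ≪
      (P[|{ω | S ω = true ∧ T ω = true ∧ C ω = true}]).map W)
    -- g₁ : version of E[Y₁₁ | S=1, D=1, W]
    (g₁ : 𝒲 → ℝ) (hg₁m : Measurable g₁)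
    (hg₁ : (fun ω => g₁ (W ω)) =ᵐ[P[|{ω | S ω = true ∧ D ω = true}]]
      (P[|{ω | S ω = true ∧ D ω = true}])[Y true true | MeasurableSpace.comap W inferInstance]) :
    ∫ ω, Y false true ω ∂(P[|{ω | S ω = false ∧ D ω = true}]) =
      ∫ ω, g₁ (W ω) ∂(P[|{ω | S ω = false ∧ D ω = true}]) := by
  set A : Set Ω := {ω | T ω = true ∧ C ω = true}
  have hA : MeasurableSet A :=
    (hT (measurableSet_singleton true)).inter (hC (measurableSet_singleton true))
  have hsample (b : Bool) : {ω | S ω = b ∧ D ω = true} =ᵐ[P] (A ∩ S ⁻¹' {b} : Set Ω) := by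
    have h : {ω | S ω = b ∧ D ω = true} = {ω | D ω = true} ∩ S ⁻¹' {b} := by
      ext; simp [and_comm]
    rw [h]
    exact hA6.inter (Filter.EventuallyEq.refl _ _)
  have hRCT : {ω | S ω = true ∧ T ω = true ∧ C ω = true} = A ∩ S ⁻¹' {true} := by
    ext; simp [A, and_comm]
  have hcond (b : Bool) : P[|A ∩ S ⁻¹' {b}] = P[|A][|S ⁻¹' {b}] :=
    (cond_cond_eq_cond_inter hA (hS (measurableSet_singleton b)) P).symm
  have hpos (b : Bool) : P[|A] (S ⁻¹' {b}) ≠ 0 := by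
    refine (cond_pos_of_inter_ne_zero hA ?_).ne'
    cases b
    · rw [← measure_congr (hsample false)]; exact hpos0.ne'
    · rw [← hRCT]; exact hpos1.ne'
  have hPA : P A ≠ 0 := fun h => hpos true (by simp [cond_eq_zero_of_meas_eq_zero h])
  rw [cond_congr_set (hsample true), hcond] at hg₁
  rw [cond_congr_set (hsample false), hRCT, hcond, hcond] at hac1
  rw [cond_congr_set (hsample false), hcond]
  calc ∫ ω, Y false true ω ∂P[|A][|S ⁻¹' {false}]
      = ∫ ω, Y true true ω ∂P[|A][|S ⁻¹' {false}] := integral_congr_ae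
        ((cond_absolutelyContinuous.trans cond_absolutelyContinuous).ae_eq (hA1 true))
    _ = ∫ ω, g₁ (W ω) ∂P[|A][|S ⁻¹' {false}] :=
        hA3.integral_cond_eq_integral_comp hW (hYmeas _ _) hS ((hYint _ _).cond_s1 hPA)
          (measurableSet_singleton true) (measurableSet_singleton false) (hpos true)
          (hpos false) hac1 hg₁m hg₁

/-- Under consistency (A1), strong ignorability of sample assignment for treated (A3) and
one-sided noncompliance (A6), the mean treated potential outcome of treated population members
is identified from the RCT: `E[Y₀₁ | S=0, D=1] = E[g₁(W) | S=0, D=1]` where `g₁` is a version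
of `E[Y₁₁ | S=1, D=1, W]`. -/
theorem pattc_first_term_identification
    {Ω 𝒲 : Type*} [MeasurableSpace Ω] [StandardBorelSpace Ω]
    [MeasurableSpace 𝒲] [StandardBorelSpace 𝒲]
    (P : Measure Ω) [IsProbabilityMeasure P]
    (S T C D : Ω → Bool) (hS : Measurable S) (hT : Measurable T)
    (hC : Measurable C) (hD : Measurable D)
    (W : Ω → 𝒲) (hW : Measurable W)
    (Y : Bool → Bool → Ω → ℝ)
    (hYmeas : ∀ s d, Measurable (Y s d)) (hYint : ∀ s d, Integrable (Y s d) P)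
    -- (A1) consistency under parallel studies
    (hA1 : ∀ d, Y false d =ᵐ[P] Y true d)
    -- (A3) strong ignorability of sample assignment for treated
    (hA3 : CondIndepFun (MeasurableSpace.comap W inferInstance) hW.comap_le (Y true true) S
      (P[|{ω | T ω = true ∧ C ω = true}]))
    (hA3pos : ∀ᵐ ω ∂(P[|{ω | T ω = true ∧ C ω = true}]),
      0 < ((P[|{ω | T ω = true ∧ C ω = true}])[({ω | S ω = true}).indicator
            (fun _ => (1 : ℝ)) | MeasurableSpace.comap W inferInstance]) ω ∧
      ((P[|{ω | T ω = true ∧ C ω = true}])[({ω | S ω = true}).indicator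
            (fun _ => (1 : ℝ)) | MeasurableSpace.comap W inferInstance]) ω < 1)
    -- (A6) one-sided noncompliance: {D=1} = {T=1} ∩ {C=1} up to null sets
    (hA6 : ({ω | D ω = true} : Set Ω) =ᵐ[P] ({ω | T ω = true} ∩ {ω | C ω = true} : Set Ω))
    -- positivity of the conditioning events
    (hpos0 : 0 < P {ω | S ω = false ∧ D ω = true})
    (hpos1 : 0 < P {ω | S ω = true ∧ T ω = true ∧ C ω = true})
    -- absolute continuity of the covariate laws
    (hac1 : (P[|{ω | S ω = false ∧ D ω = true}]).map W ≪
      (P[|{ω | S ω = true ∧ T ω = true ∧ C ω = true}]).map W)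
    -- g₁ : version of E[Y₁₁ | S=1, D=1, W]
    (g₁ : 𝒲 → ℝ) (hg₁m : Measurable g₁)
    (hg₁ : (fun ω => g₁ (W ω)) =ᵐ[P[|{ω | S ω = true ∧ D ω = true}]]
      (P[|{ω | S ω = true ∧ D ω = true}])[Y true true | MeasurableSpace.comap W inferInstance]) :
    ∫ ω, Y false true ω ∂(P[|{ω | S ω = false ∧ D ω = true}]) =
      ∫ ω, g₁ (W ω) ∂(P[|{ω | S ω = false ∧ D ω = true}]) :=
  pattc_first_term_identification_general P S T C D hS hT hC W hW Y hYmeas hYint hA1 hA3 hA6 hpos0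
    hpos1 hac1 g₁ hg₁m hg₁
end

section
/- Let X : Ω → ℝ be integrable and Z : Ω → 𝒵 measurable into a standard Borel space, and let 𝓖 be a sub-σ-algebra of 𝓕. If X is conditionally independent of Z given 𝓖 under P, then the conditional expectation of X given the σ-algebra 𝓖 ⊔ σ(Z) generated by 𝓖 and Z equals the conditional expectation of X given 𝓖, P-almost surely: E[X | 𝓖 ⊔ σ(Z)] = E[X | 𝓖] a.s. -/
/-!
For `t ∈ σ(X)`, `A ∈ 𝓖` and `B ∈ σ(Z)`, pulling the `𝓖`-measurable factor out and then using
conditional independence gives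
`∫_{A ∩ B} P⟦t | 𝓖⟧ = ∫_A P⟦t | 𝓖⟧ P⟦B | 𝓖⟧ = ∫_A P⟦t ∩ B | 𝓖⟧ = P(A ∩ B ∩ t)`,
and the sets `A ∩ B` form a π-system generating `𝓖 ⊔ σ(Z)`; hence `P⟦t | 𝓖 ⊔ σ(Z)⟧ = P⟦t | 𝓖⟧`.
Both conditional expectations are continuous and linear on `L¹`, so the identity extends from
indicators to every integrable `σ(X)`-measurable function. Replacing `X` by a measurable version
first makes `σ(X)` a sub-σ-algebra of `𝓕` without affecting conditional independence.
-/

open MeasureTheory ProbabilityTheory MeasurableSpace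

namespace MeasureTheory

variable {Ω E : Type*} {m m₁ m₂ mΩ : MeasurableSpace Ω} {μ : Measure Ω}
  [NormedAddCommGroup E] [NormedSpace ℝ E]

lemma isPiSystem_image2_inter (m₁ m₂ : MeasurableSpace Ω) :
    IsPiSystem (Set.image2 (· ∩ ·) {s | MeasurableSet[m₁] s} {s | MeasurableSet[m₂] s}) := by
  rintro _ ⟨A₁, hA₁, B₁, hB₁, rfl⟩ _ ⟨A₂, hA₂, B₂, hB₂, rfl⟩ -
  refine ⟨A₁ ∩ A₂, hA₁.inter hA₂, B₁ ∩ B₂, hB₁.inter hB₂, ?_⟩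
  exact Set.inter_inter_inter_comm A₁ A₂ B₁ B₂

lemma sup_eq_generateFrom_image2_inter (m₁ m₂ : MeasurableSpace Ω) :
    m₁ ⊔ m₂ =
      generateFrom (Set.image2 (· ∩ ·) {s | MeasurableSet[m₁] s} {s | MeasurableSet[m₂] s}) := by
  refine le_antisymm (sup_le (fun A hA => ?_) (fun B hB => ?_)) (generateFrom_le ?_)
  · exact measurableSet_generateFrom ⟨A, hA, Set.univ, MeasurableSet.univ, Set.inter_univ A⟩
  · exact measurableSet_generateFrom ⟨Set.univ, MeasurableSet.univ, B, hB, Set.univ_inter B⟩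
  · rintro _ ⟨A, hA, B, hB, rfl⟩
    exact (le_sup_left (b := m₂) A hA).inter (le_sup_right (a := m₁) B hB)

lemma setIntegral_eq_of_forall_inter (hm₁ : m₁ ≤ mΩ) (hm₂ : m₂ ≤ mΩ)
    {f g : Ω → E} (hf : Integrable f μ) (hg : Integrable g μ)
    (h : ∀ A B, MeasurableSet[m₁] A → MeasurableSet[m₂] B →
      ∫ x in A ∩ B, f x ∂μ = ∫ x in A ∩ B, g x ∂μ)
    {s : Set Ω} (hs : MeasurableSet[m₁ ⊔ m₂] s) : ∫ x in s, f x ∂μ = ∫ x in s, g x ∂μ := by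
  have hm : m₁ ⊔ m₂ ≤ mΩ := sup_le hm₁ hm₂
  induction s, hs using induction_on_inter (sup_eq_generateFrom_image2_inter m₁ m₂)
    (isPiSystem_image2_inter m₁ m₂) with
  | empty => simp
  | basic _ hs =>
    obtain ⟨A, hA, B, hB, rfl⟩ := hs
    exact h A B hA hB
  | compl t ht iht =>
    have huniv := h Set.univ Set.univ MeasurableSet.univ MeasurableSet.univ
    rw [Set.univ_inter, Measure.restrict_univ] at huniv
    rw [setIntegral_compl (hm t ht) hf, setIntegral_compl (hm t ht) hg, huniv, iht]
  | iUnion t hdisj ht iht =>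
    rw [integral_iUnion (fun i => hm _ (ht i)) hdisj hf.integrableOn,
      integral_iUnion (fun i => hm _ (ht i)) hdisj hg.integrableOn]
    exact tsum_congr iht

lemma isClosed_setOf_condExp_ae_eq [CompleteSpace E] [IsFiniteMeasure μ]
    (hm₁ : m₁ ≤ mΩ) (hm₂ : m₂ ≤ mΩ) :
    IsClosed {f : lpMeas E ℝ m 1 μ | μ[(f : Ω → E) | m₁] =ᵐ[μ] μ[(f : Ω → E) | m₂]} := by
  have hL1 : ∀ {m'} (hm' : m' ≤ mΩ) (f : Ω →₁[μ] E), μ[f | m'] =ᵐ[μ] condExpL1CLM E hm' μ f :=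
    fun hm' f => by simpa using condExp_ae_eq_condExpL1CLM hm' (L1.integrable_coeFn f)
  convert isClosed_eq ((condExpL1CLM E hm₁ μ).continuous.comp continuous_subtype_val)
    ((condExpL1CLM E hm₂ μ).continuous.comp continuous_subtype_val) using 1
  ext f
  simp only [Set.mem_ofPred_eq, Function.comp_apply, Lp.ext_iff]
  exact ⟨fun h => (hL1 hm₁ f).symm.trans (h.trans (hL1 hm₂ f)),
    fun h => (hL1 hm₁ f).trans (h.trans (hL1 hm₂ f).symm)⟩

lemma setIntegral_inter_eq_setIntegral_mul_condExp [IsFiniteMeasure μ]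
    (hm : m ≤ mΩ) {s t : Set Ω} (hs : MeasurableSet[m] s) (ht : MeasurableSet t) {g : Ω → ℝ}
    (hgm : StronglyMeasurable[m] g) (hg : Integrable g μ) :
    ∫ x in s ∩ t, g x ∂μ = ∫ x in s, (g * μ⟦t | m⟧) x ∂μ := by
  have hind : Integrable (t.indicator fun _ => (1 : ℝ)) μ := (integrable_const 1).indicator ht
  have hgt : t.indicator g = g * t.indicator fun _ => 1 := by
    ext x; by_cases hx : x ∈ t <;> simp [hx]
  calc ∫ x in s ∩ t, g x ∂μ = ∫ x in s, t.indicator g x ∂μ := (setIntegral_indicator ht).symm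
    _ = ∫ x in s, μ[t.indicator g | m] x ∂μ := (setIntegral_condExp hm (hg.indicator ht) hs).symm
    _ = ∫ x in s, (g * μ⟦t | m⟧) x ∂μ := by
      refine setIntegral_congr_ae (hm s hs) (Filter.Eventually.mono ?_ fun _ hx _ => hx)
      rw [hgt]
      exact condExp_mul_of_stronglyMeasurable_left hgm (hgt ▸ hg.indicator ht) hind

end MeasureTheory

namespace ProbabilityTheory

variable {Ω : Type*} {m' m₁ m₂ mΩ : MeasurableSpace Ω} [StandardBorelSpace Ω] {hm' : m' ≤ mΩ}
  {μ : Measure Ω} [IsFiniteMeasure μ]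

theorem CondIndepFun.congr {β γ : Type*} [MeasurableSpace β] [MeasurableSpace γ]
    {f f' : Ω → β} {g g' : Ω → γ} (h : CondIndepFun m' hm' f g μ)
    (hf : f =ᵐ[μ] f') (hg : g =ᵐ[μ] g') : CondIndepFun m' hm' f' g' μ := by
  -- `μ` is a mixture of the conditional measures, so a `μ`-null set is null for almost all of them
  rw [← condExpKernel_comp_trim (μ := μ) hm'] at hf hg
  exact Kernel.IndepFun.congr' h (Measure.ae_ae_of_ae_comp hf) (Measure.ae_ae_of_ae_comp hg)

theorem CondIndep.condExp_indicator_sup_ae_eq (h : CondIndep m' m₁ m₂ hm' μ) (hm₁ : m₁ ≤ mΩ)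
    (hm₂ : m₂ ≤ mΩ) {t : Set Ω} (ht : MeasurableSet[m₁] t) :
    μ⟦t | m' ⊔ m₂⟧ =ᵐ[μ] μ⟦t | m'⟧ := by
  have hind : ∀ {s}, MeasurableSet s → Integrable (s.indicator fun _ => (1 : ℝ)) μ :=
    fun hs => (integrable_const 1).indicator hs
  refine (ae_eq_condExp_of_forall_setIntegral_eq (sup_le hm' hm₂) (hind (hm₁ t ht))
    (fun _ _ _ => integrable_condExp.integrableOn) (fun s hs _ => ?_)
    (stronglyMeasurable_condExp.mono (le_sup_left : m' ≤ m' ⊔ m₂)).aestronglyMeasurable).symm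
  refine setIntegral_eq_of_forall_inter hm' hm₂ integrable_condExp (hind (hm₁ t ht))
    (fun A B hA hB => ?_) hs
  calc ∫ x in A ∩ B, (μ⟦t | m'⟧) x ∂μ = ∫ x in A, (μ⟦t | m'⟧ * μ⟦B | m'⟧) x ∂μ :=
        setIntegral_inter_eq_setIntegral_mul_condExp hm' hA (hm₂ B hB) stronglyMeasurable_condExp
          integrable_condExp
    _ = ∫ x in A, (μ⟦t ∩ B | m'⟧) x ∂μ :=
        setIntegral_congr_ae (hm' A hA)
          (((condIndep_iff _ _ _ hm' hm₁ hm₂ μ).mp h t B ht hB).symm.mono fun _ hx _ => hx)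
    _ = ∫ x in A, (t ∩ B).indicator (fun _ => (1 : ℝ)) x ∂μ :=
        setIntegral_condExp hm' (hind ((hm₁ t ht).inter (hm₂ B hB))) hA
    _ = ∫ x in A ∩ B, t.indicator (fun _ => (1 : ℝ)) x ∂μ := by
        rw [Set.inter_comm t, ← Set.indicator_indicator, setIntegral_indicator (hm₂ B hB)]

theorem CondIndep.condExp_sup_ae_eq (h : CondIndep m' m₁ m₂ hm' μ) (hm₁ : m₁ ≤ mΩ)
    (hm₂ : m₂ ≤ mΩ) {f : Ω → ℝ} (hfm : AEStronglyMeasurable[m₁] f μ) (hf : Integrable f μ) :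
    μ[f | m' ⊔ m₂] =ᵐ[μ] μ[f | m'] := by
  refine MemLp.induction_stronglyMeasurable hm₁ ENNReal.one_ne_top
    (fun f => μ[f | m' ⊔ m₂] =ᵐ[μ] μ[f | m']) ?_ ?_
    (isClosed_setOf_condExp_ae_eq (sup_le hm' hm₂) hm') ?_ (memLp_one_iff_integrable.2 hf) hfm
  · intro c t ht _
    have hct : (t.indicator fun _ => c) = c • t.indicator fun _ => (1 : ℝ) := by
      ext x; by_cases hx : x ∈ t <;> simp [hx]
    rw [hct]
    exact (condExp_smul c _ _).trans
      (((h.condExp_indicator_sup_ae_eq hm₁ hm₂ ht).const_smul c).trans (condExp_smul c _ _).symm)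
  · intro f g _ hf hg _ _ hf_eq hg_eq
    have hf := memLp_one_iff_integrable.1 hf
    have hg := memLp_one_iff_integrable.1 hg
    exact (condExp_add hf hg _).trans ((hf_eq.add hg_eq).trans (condExp_add hf hg _).symm)
  · intro f g hfg _ hf_eq
    exact (condExp_congr_ae hfg).symm.trans (hf_eq.trans (condExp_congr_ae hfg))

end ProbabilityTheory

theorem condexp_join_of_condIndepFun_general
    {Ω 𝒵 : Type*} {m0 : MeasurableSpace Ω} [StandardBorelSpace Ω]
    [MeasurableSpace 𝒵]
    (P : Measure Ω) [IsProbabilityMeasure P]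
    (X : Ω → ℝ) (hXint : Integrable X P)
    (Z : Ω → 𝒵) (hZ : Measurable Z)
    (𝒢 : MeasurableSpace Ω) (h𝒢 : 𝒢 ≤ m0)
    (hCI : CondIndepFun 𝒢 h𝒢 X Z P) :
    P[X | 𝒢 ⊔ MeasurableSpace.comap Z inferInstance] =ᵐ[P] P[X | 𝒢] := by
  obtain ⟨X', hX', hXX'⟩ := hXint.aestronglyMeasurable
  have hCI' := (condIndepFun_iff_condIndep _ _ _ _ _).mp (hCI.congr hXX' .rfl)
  exact hCI'.condExp_sup_ae_eq hX'.measurable.comap_le hZ.comap_le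
    ⟨X', (comap_measurable X').stronglyMeasurable, hXX'⟩ hXint

/-- If an integrable `X : Ω → ℝ` is conditionally independent of `Z : Ω → 𝒵` given a
sub-σ-algebra `𝓖`, then `E[X | 𝓖 ⊔ σ(Z)] = E[X | 𝓖]` almost surely. -/
theorem condexp_join_of_condIndepFun
    {Ω 𝒵 : Type*} {m0 : MeasurableSpace Ω} [StandardBorelSpace Ω]
    [MeasurableSpace 𝒵] [StandardBorelSpace 𝒵]
    (P : Measure Ω) [IsProbabilityMeasure P]
    (X : Ω → ℝ) (hXint : Integrable X P)
    (Z : Ω → 𝒵) (hZ : Measurable Z)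
    (𝒢 : MeasurableSpace Ω) (h𝒢 : 𝒢 ≤ m0)
    (hCI : CondIndepFun 𝒢 h𝒢 X Z P) :
    P[X | 𝒢 ⊔ MeasurableSpace.comap Z inferInstance] =ᵐ[P] P[X | 𝒢] :=
  condexp_join_of_condIndepFun_general P X hXint Z hZ 𝒢 h𝒢 hCI
end
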